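/- arXiv:1007.1852 — 3 statements merged into one kernel-verified Lean document; each statement's English description precedes it below -/
import Mathlib

section
/- (Abstract Sampling Theorem) Let H be a separable Hilbert space, S, W ⊂ H closed subspaces with W ∩ S^⊥ = {0}, and {s_k}, {w_k} Riesz bases for S, W with constants A, B and C, D respectively. Let f = Σ β_k w_k with β ∈ l²(ℕ), and let U = (⟨s_i, w_j⟩)_{i,j}. Then for each n there exists M such that for all m ≥ M the system (P_n U* P_m U P_n)β̃ = P_n U* P_m η_f (where η_f = (⟨s_k, f⟩)_k) has a unique solution β̃ ∈ P_n l²(ℕ), and the reconstruction f̃ = Σ_{k=1}^n β̃_k w_k satisfies ‖f − f̃‖ ≤ √B (1 + K_{n,m}) ‖P_n^⊥ β‖, where K_{n,m} = ‖(P_n U* P_m U P_n |_{P_n l²(ℕ)})^{-1} P_n U* P_m U P_n^⊥‖. -/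
/-!
`U = S* W` is injective: `W` is bounded below, `S* g = 0` means `g ⊥ s_k` for all `k`, and `W α`
lies in the closed span of the `w_k`, so `W ∩ S^⊥ = {0}` forces `W α = 0`. The finite section
`P_n U* P_m U P_n` on `P_n ℓ²` is the Gram operator `T_m* T_m` of `T_m = P_m U |_{P_n ℓ²}`, so it
is invertible as soon as `T_m` is injective. Since `P_m → I` strongly, `T_m → U |_{P_n ℓ²}`
pointwise, hence in norm because `P_n ℓ²` is finite-dimensional, and injective operators on a
finite-dimensional space form an open set.

For the estimate, applying the left inverse of the section to the system gives
`β̃ - P_n β = K (β - P_n β)`, so `‖β - β̃‖ ≤ (1 + ‖K‖) ‖P_n^⊥ β‖`, and the upper Riesz bound of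
`W` contributes the factor `√B`.
-/

noncomputable section
open MeasureTheory ContinuousLinearMap Filter Topology
open scoped InnerProductSpace

/-- The sequence space `ℓ²(ℕ)`. -/
abbrev H2 : Type := lp (fun _ : ℕ => ℂ) 2

/-- The span of the first `n` canonical basis vectors `e_0, …, e_{n-1}` of `ℓ²(ℕ)`. -/
def Ksub (n : ℕ) : Submodule ℂ H2 :=
  Submodule.span ℂ ((fun i => lp.single 2 i (1:ℂ)) '' (Set.Iio n))

instance (n : ℕ) : FiniteDimensional ℂ (Ksub n) :=
  FiniteDimensional.span_of_finite ℂ ((Set.finite_Iio n).image _)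

/-- The coordinate projection `P_n` onto the span of the first `n` basis vectors. -/
def Pn (n : ℕ) : H2 →L[ℂ] H2 :=
  (Ksub n).subtypeL.comp (Ksub n).orthogonalProjectionOnto

/-- The compression of an operator `T` to the range of `P_n`, as an operator on `Ksub n`. -/
def compK (n : ℕ) (T : H2 →L[ℂ] H2) : Ksub n →L[ℂ] Ksub n :=
  (Ksub n).orthogonalProjectionOnto.comp (T.comp (Ksub n).subtypeL)

/-- The compression of `U* P_m U` to the range of `P_n`, i.e. `P_n U* P_m U P_n` viewed
as an operator on `Ksub n`. -/
def compKm (n m : ℕ) (U : H2 →L[ℂ] H2) : Ksub n →L[ℂ] Ksub n :=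
  compK n ((ContinuousLinearMap.adjoint U).comp ((Pn m).comp U))

/-- The uneven finite section `P_n U* P_m U P_n` as an operator on all of `ℓ²(ℕ)`. -/
def Sec (n m : ℕ) (U : H2 →L[ℂ] H2) : H2 →L[ℂ] H2 :=
  (Pn n).comp ((ContinuousLinearMap.adjoint U).comp ((Pn m).comp (U.comp (Pn n))))

/-- The section `P_n U* U P_n` as an operator on all of `ℓ²(ℕ)`. -/
def SecInf (n : ℕ) (U : H2 →L[ℂ] H2) : H2 →L[ℂ] H2 :=
  (Pn n).comp ((ContinuousLinearMap.adjoint U).comp (U.comp (Pn n)))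

/-- `P_n U* P_m U P_n^⊥` as an operator on `ℓ²(ℕ)`. -/
def SecPerp (n m : ℕ) (U : H2 →L[ℂ] H2) : H2 →L[ℂ] H2 :=
  (Pn n).comp ((ContinuousLinearMap.adjoint U).comp ((Pn m).comp
    (U.comp (ContinuousLinearMap.id ℂ H2 - Pn n))))

/-- The operator `(P_n U* P_m U P_n|_{P_n ℓ²})⁻¹ P_n U* P_m U P_n^⊥`, where `Ainv` is the
inverse of the finite section on `Ksub n`. -/
def Kop (n m : ℕ) (U : H2 →L[ℂ] H2) (Ainv : Ksub n →L[ℂ] Ksub n) : H2 →L[ℂ] H2 :=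
  (Ksub n).subtypeL.comp (Ainv.comp ((Ksub n).orthogonalProjectionOnto.comp
    ((ContinuousLinearMap.adjoint U).comp ((Pn m).comp
      (U.comp (ContinuousLinearMap.id ℂ H2 - Pn n))))))

theorem ContinuousLinearMap.tendsto_of_tendsto_apply {𝕜 E F ι : Type*}
    [NontriviallyNormedField 𝕜] [CompleteSpace 𝕜] [NormedAddCommGroup E] [NormedSpace 𝕜 E]
    [FiniteDimensional 𝕜 E] [NormedAddCommGroup F] [NormedSpace 𝕜 F] {l : Filter ι}
    {T : ι → E →L[𝕜] F} {T₀ : E →L[𝕜] F} (h : ∀ x, Tendsto (fun i => T i x) l (𝓝 (T₀ x))) :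
    Tendsto T l (𝓝 T₀) := by
  let b := Module.finBasis 𝕜 E
  obtain ⟨C, -, hC⟩ := b.exists_opNorm_le (F := F)
  have hsum : Tendsto (fun i => ∑ j, ‖(T i - T₀) (b j)‖) l (𝓝 0) := by
    simpa using tendsto_finsetSum Finset.univ fun j _ =>
      tendsto_iff_norm_sub_tendsto_zero.mp (h (b j))
  refine tendsto_iff_norm_sub_tendsto_zero.mpr (squeeze_zero (fun _ => norm_nonneg _)
    (fun i => hC (Finset.sum_nonneg fun j _ => norm_nonneg _) fun j => ?_)
    (by simpa using hsum.const_mul C))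
  exact Finset.single_le_sum (f := fun j => ‖(T i - T₀) (b j)‖) (fun _ _ => norm_nonneg _)
    (Finset.mem_univ j)

theorem ContinuousLinearMap.eventually_injective_of_tendsto_apply {𝕜 E F ι : Type*}
    [NontriviallyNormedField 𝕜] [CompleteSpace 𝕜] [NormedAddCommGroup E] [NormedSpace 𝕜 E]
    [FiniteDimensional 𝕜 E] [NormedAddCommGroup F] [NormedSpace 𝕜 F] {l : Filter ι}
    {T : ι → E →L[𝕜] F} {T₀ : E →L[𝕜] F}
    (h : ∀ x, Tendsto (fun i => T i x) l (𝓝 (T₀ x))) (hT₀ : Function.Injective T₀) :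
    ∀ᶠ i in l, Function.Injective (T i) :=
  tendsto_of_tendsto_apply h (isOpen_injective.mem_nhds hT₀)

lemma injective_of_mul_sq_norm_le {𝕜 E F : Type*} [NormedField 𝕜] [NormedAddCommGroup E]
    [NormedAddCommGroup F] [NormedSpace 𝕜 E] [NormedSpace 𝕜 F] {T : E →L[𝕜] F} {A : ℝ}
    (hA : 0 < A) (hT : ∀ x, A * ‖x‖ ^ 2 ≤ ‖T x‖ ^ 2) : Function.Injective T := by
  refine (injective_iff_map_eq_zero T).mpr fun x hx => norm_eq_zero.mp ?_
  have := hT x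
  rw [hx, norm_zero, zero_pow two_ne_zero] at this
  exact pow_eq_zero_iff two_ne_zero |>.mp (le_antisymm (by nlinarith) (sq_nonneg _))

lemma norm_le_sqrt_mul_norm {E F : Type*} [NormedAddCommGroup E] [NormedAddCommGroup F]
    {W : E → F} {B : ℝ} (hB : ∀ α, ‖W α‖ ^ 2 ≤ B * ‖α‖ ^ 2) (α : E) :
    ‖W α‖ ≤ Real.sqrt B * ‖α‖ := by
  rw [← Real.sqrt_sq (norm_nonneg (W α)), ← Real.sqrt_sq (norm_nonneg α),
    ← Real.sqrt_mul' B (sq_nonneg _)]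
  exact Real.sqrt_le_sqrt (hB α)

lemma mem_closure_span_of_hasSum {H : Type*} [NormedAddCommGroup H] [NormedSpace ℂ H]
    {w : ℕ → H} {W : H2 →L[ℂ] H}
    (hW : ∀ α : H2, HasSum (fun k => α k • w k) (W α)) (α : H2) :
    W α ∈ (Submodule.span ℂ (Set.range w)).topologicalClosure :=
  mem_closure_of_tendsto (hW α).tendsto_sum_nat (Eventually.of_forall fun _ =>
    Submodule.sum_mem _ fun k _ => Submodule.smul_mem _ _ (Submodule.subset_span ⟨k, rfl⟩))

lemma single_mem_Ksub {n i : ℕ} (hi : i < n) (a : ℂ) : (lp.single 2 i a : H2) ∈ Ksub n := by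
  have : (lp.single 2 i a : H2) = a • lp.single 2 i 1 := by
    rw [← lp.single_smul, smul_eq_mul, mul_one]
  exact this ▸ Submodule.smul_mem _ a (Submodule.subset_span ⟨i, hi, rfl⟩)

lemma Ksub_mono : Monotone Ksub := fun _ _ h =>
  Submodule.span_mono (Set.image_mono (Set.Iio_subset_Iio h))

lemma tendsto_Pn_apply (y : H2) : Tendsto (fun m => Pn m y) atTop (𝓝 y) := by
  refine Submodule.starProjection_tendsto_self Ksub Ksub_mono y fun x _ => ?_
  have hsum := (lp.hasSum_single ENNReal.ofNat_ne_top x).tendsto_sum_nat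
  refine mem_closure_of_tendsto hsum (Eventually.of_forall fun m => ?_)
  exact Submodule.mem_iSup_of_mem m
    (Submodule.sum_mem _ fun i hi => single_mem_Ksub (Finset.mem_range.mp hi) _)

section RieszSystem

variable {H : Type*} [NormedAddCommGroup H] [InnerProductSpace ℂ H] [CompleteSpace H]

lemma adjoint_apply_eq_inner_of_hasSum {s : ℕ → H} {S : H2 →L[ℂ] H}
    (hS : ∀ α : H2, HasSum (fun k => α k • s k) (S α)) (g : H) (k : ℕ) :
    adjoint S g k = ⟪s k, g⟫_ℂ := by
  have hSk : S (lp.single 2 k 1) = s k := by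
    refine (hS _).unique ?_
    convert hasSum_ite_eq k (s k) using 2 with j
    by_cases h : j = k
    · subst h; simp
    · simp [h]
  rw [← hSk, ← adjoint_inner_right, lp.inner_single_left]
  simp

lemma injective_adjoint_comp {s w : ℕ → H} {S W : H2 →L[ℂ] H} {A : ℝ} (hA : 0 < A)
    (hS : ∀ α : H2, HasSum (fun k => α k • s k) (S α))
    (hW : ∀ α : H2, HasSum (fun k => α k • w k) (W α))
    (hWA : ∀ α : H2, A * ‖α‖ ^ 2 ≤ ‖W α‖ ^ 2)
    (hWS : ∀ g : H, g ∈ (Submodule.span ℂ (Set.range w)).topologicalClosure →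
      (∀ k, ⟪s k, g⟫_ℂ = 0) → g = 0) :
    Function.Injective (adjoint S ∘L W) := by
  refine (injective_iff_map_eq_zero _).mpr fun α hα => ?_
  have hWα : W α = 0 := hWS _ (mem_closure_span_of_hasSum hW α) fun k => by
    rw [← adjoint_apply_eq_inner_of_hasSum hS, ← comp_apply, hα]
    rfl
  exact (injective_iff_map_eq_zero W).mp (injective_of_mul_sq_norm_le hA hWA) α hWα

end RieszSystem

def sectionFactor (n m : ℕ) (U : H2 →L[ℂ] H2) : Ksub n →L[ℂ] H2 :=
  (Pn m).comp (U.comp (Ksub n).subtypeL)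

lemma compKm_eq_adjoint_comp_self (n m : ℕ) (U : H2 →L[ℂ] H2) :
    compKm n m U = adjoint (sectionFactor n m U) ∘L sectionFactor n m U := by
  have hPm : adjoint (Pn m) = Pn m := isSelfAdjoint_starProjection (Ksub m)
  have hPm2 : Pn m ∘L Pn m = Pn m := (Ksub m).isIdempotentElem_starProjection
  simp only [compKm, compK, sectionFactor, adjoint_comp, hPm, Submodule.adjoint_subtypeL]
  ext1 x
  simp only [coe_comp, Function.comp_apply]
  rw [← comp_apply (Pn m) (Pn m), hPm2]

lemma injective_compKm_iff (n m : ℕ) (U : H2 →L[ℂ] H2) :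
    Function.Injective (compKm n m U) ↔ Function.Injective (sectionFactor n m U) := by
  rw [compKm_eq_adjoint_comp_self, coe_comp, adjoint_comp_self_injective_iff]

lemma eventually_bijective_compKm {U : H2 →L[ℂ] H2} (hU : Function.Injective U) (n : ℕ) :
    ∀ᶠ m in atTop, Function.Bijective (compKm n m U) := by
  have hconv : ∀ x, Tendsto (fun m => sectionFactor n m U x) atTop
      (𝓝 (U.comp (Ksub n).subtypeL x)) := fun x => tendsto_Pn_apply _
  filter_upwards [eventually_injective_of_tendsto_apply hconv
    (hU.comp Subtype.val_injective)] with m hm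
  have hinj := (injective_compKm_iff n m U).mpr hm
  exact ⟨hinj, LinearMap.injective_iff_surjective.mp hinj⟩

lemma Sec_apply_of_mem {n : ℕ} (m : ℕ) (U : H2 →L[ℂ] H2) {x : H2} (hx : x ∈ Ksub n) :
    Sec n m U x = compKm n m U ⟨x, hx⟩ := by
  have hPn : Pn n x = x := (Submodule.starProjection_eq_self_iff (K := Ksub n)).mpr hx
  simp only [Sec, coe_comp, Function.comp_apply, hPn]
  rfl

lemma existsUnique_Sec_eq {n m : ℕ} {U : H2 →L[ℂ] H2}
    (hbij : Function.Bijective (compKm n m U)) (y : H2) :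
    ∃! x : H2, x ∈ Ksub n ∧ Sec n m U x = Pn n (adjoint U y) := by
  obtain ⟨x, hx⟩ := hbij.surjective ((Ksub n).orthogonalProjectionOnto (adjoint U y))
  refine ⟨x, ⟨x.2, by rw [Sec_apply_of_mem m U x.2, hx]; rfl⟩, ?_⟩
  rintro x' ⟨hx', hsec⟩
  rw [Sec_apply_of_mem m U hx'] at hsec
  have : compKm n m U ⟨x', hx'⟩ = compKm n m U x := Subtype.ext (by rw [hsec, hx]; rfl)
  exact congrArg Subtype.val (hbij.injective this)

section ErrorBound

variable {n m : ℕ} {U : H2 →L[ℂ] H2} {Ainv : Ksub n →L[ℂ] Ksub n} {β x : H2}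

lemma Kop_apply_sub_Pn (hAinv : Ainv ∘L compKm n m U = ContinuousLinearMap.id ℂ (Ksub n))
    (hx : x ∈ Ksub n) (hsec : Sec n m U x = Pn n (adjoint U (Pn m (U β)))) :
    Kop n m U Ainv (β - Pn n β) = x - Pn n β := by
  set z : Ksub n := (Ksub n).orthogonalProjectionOnto β
  have hx' :
      compKm n m U ⟨x, hx⟩ = (Ksub n).orthogonalProjectionOnto (adjoint U (Pn m (U β))) :=
    Subtype.ext ((Sec_apply_of_mem m U hx).symm.trans hsec)
  have hz : compKm n m U z = (Ksub n).orthogonalProjectionOnto (adjoint U (Pn m (U z))) := rfl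
  have hperp : (ContinuousLinearMap.id ℂ H2 - Pn n) (β - Pn n β) = β - Pn n β := by
    have hPn : Pn n (Pn n β) = Pn n β := (Submodule.starProjection_eq_self_iff).mpr z.2
    simp only [sub_apply, id_apply, map_sub, hPn, sub_self, sub_zero]
  have hdiff : compKm n m U (⟨x, hx⟩ - z) =
      (Ksub n).orthogonalProjectionOnto (adjoint U (Pn m (U (β - Pn n β)))) := by
    rw [map_sub, hx', hz]
    simp only [map_sub]
    rfl
  have hleft : Ainv (compKm n m U (⟨x, hx⟩ - z)) = ⟨x, hx⟩ - z := by
    rw [← comp_apply, hAinv, id_apply]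
  simp only [Kop, coe_comp, Function.comp_apply]
  rw [hperp, ← hdiff, hleft]
  rfl

lemma norm_sub_le_one_add_norm_Kop_mul
    (hAinv : Ainv ∘L compKm n m U = ContinuousLinearMap.id ℂ (Ksub n))
    (hx : x ∈ Ksub n) (hsec : Sec n m U x = Pn n (adjoint U (Pn m (U β)))) :
    ‖β - x‖ ≤ (1 + ‖Kop n m U Ainv‖) * ‖β - Pn n β‖ := by
  have hβx : β - x = (β - Pn n β) - Kop n m U Ainv (β - Pn n β) := by
    rw [Kop_apply_sub_Pn hAinv hx hsec, sub_sub_sub_cancel_right]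
  rw [hβx, add_mul, one_mul]
  refine (norm_sub_le _ _).trans ?_
  gcongr
  exact (Kop n m U Ainv).le_opNorm _

end ErrorBound

theorem abstract_sampling_theorem_general {H : Type*} [NormedAddCommGroup H]
    [InnerProductSpace ℂ H] [CompleteSpace H]
    (s w : ℕ → H) (A B : ℝ) (hA : 0 < A)
    (S W : H2 →L[ℂ] H)
    (hS : ∀ α : H2, HasSum (fun k => α k • s k) (S α))
    (hW : ∀ α : H2, HasSum (fun k => α k • w k) (W α))
    (hrw : ∀ α : H2, A * ‖α‖ ^ 2 ≤ ‖W α‖ ^ 2 ∧ ‖W α‖ ^ 2 ≤ B * ‖α‖ ^ 2)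
    (hWS : ∀ g : H, g ∈ (Submodule.span ℂ (Set.range w)).topologicalClosure →
      (∀ k, ⟪s k, g⟫_ℂ = 0) → g = 0)
    (β : H2) (f : H) (hf : f = W β) (n : ℕ) :
    ∃ M : ℕ, ∀ m, M ≤ m →
      (∃! βt : H2, βt ∈ Ksub n ∧
        Sec n m ((ContinuousLinearMap.adjoint S).comp W) βt =
          ((Pn n).comp ((ContinuousLinearMap.adjoint
              ((ContinuousLinearMap.adjoint S).comp W)).comp (Pn m)))
            ((ContinuousLinearMap.adjoint S) f)) ∧
      (∀ βt : H2, βt ∈ Ksub n →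
        Sec n m ((ContinuousLinearMap.adjoint S).comp W) βt =
          ((Pn n).comp ((ContinuousLinearMap.adjoint
              ((ContinuousLinearMap.adjoint S).comp W)).comp (Pn m)))
            ((ContinuousLinearMap.adjoint S) f) →
        ∀ Ainv : Ksub n →L[ℂ] Ksub n,
          Ainv.comp (compKm n m ((ContinuousLinearMap.adjoint S).comp W))
            = ContinuousLinearMap.id ℂ (Ksub n) →
          (compKm n m ((ContinuousLinearMap.adjoint S).comp W)).comp Ainv
            = ContinuousLinearMap.id ℂ (Ksub n) →
          ‖f - W βt‖ ≤ Real.sqrt B *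
            (1 + ‖Kop n m ((ContinuousLinearMap.adjoint S).comp W) Ainv‖) *
            ‖β - Pn n β‖) := by
  have hU := injective_adjoint_comp hA hS hW (fun α => (hrw α).1) hWS
  obtain ⟨M, hM⟩ := eventually_atTop.mp (eventually_bijective_compKm hU n)
  have hSf : adjoint S f = (adjoint S ∘L W) β := by rw [hf]; rfl
  refine ⟨M, fun m hm => ⟨?_, fun x hx hsec Ainv hAinv _ => ?_⟩⟩
  · rw [hSf]
    exact existsUnique_Sec_eq (hM m hm) _
  · rw [hSf] at hsec
    rw [hf, ← map_sub, mul_assoc]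
    exact (norm_le_sqrt_mul_norm (fun α => (hrw α).2) _).trans
      (mul_le_mul_of_nonneg_left (norm_sub_le_one_add_norm_Kop_mul hAinv hx hsec)
        (Real.sqrt_nonneg B))

/-- **Abstract Sampling Theorem.** Let `{s_k}`, `{w_k}` be Riesz bases for
closed subspaces `S`, `W` of a separable Hilbert space with `W ∩ S^⊥ = {0}`, let
`f = Σ β_k w_k` with `β ∈ ℓ²(ℕ)`, and let `U = S*W` (the matrix `(⟨s_i, w_j⟩)`).  Then for
each `n` there is `M` such that for all `m ≥ M` the system
`(P_n U* P_m U P_n) β̃ = P_n U* P_m η_f` (with `η_f = S*f = (⟨s_k, f⟩)_k`) has a unique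
solution `β̃` in the range of `P_n`, and the reconstruction `f̃ = Σ_{k<n} β̃_k w_k = W β̃`
satisfies `‖f − f̃‖ ≤ √B (1 + K_{n,m}) ‖P_n^⊥ β‖`, where
`K_{n,m} = ‖(P_n U* P_m U P_n|_{P_n ℓ²})⁻¹ P_n U* P_m U P_n^⊥‖`. -/
theorem abstract_sampling_theorem {H : Type*} [NormedAddCommGroup H]
    [InnerProductSpace ℂ H] [CompleteSpace H]
    (s w : ℕ → H) (A B C D : ℝ) (hA : 0 < A) (hAB : A ≤ B) (hC : 0 < C) (hCD : C ≤ D)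
    (S W : H2 →L[ℂ] H)
    (hS : ∀ α : H2, HasSum (fun k => α k • s k) (S α))
    (hW : ∀ α : H2, HasSum (fun k => α k • w k) (W α))
    (hrw : ∀ α : H2, A * ‖α‖ ^ 2 ≤ ‖W α‖ ^ 2 ∧ ‖W α‖ ^ 2 ≤ B * ‖α‖ ^ 2)
    (hrs : ∀ α : H2, C * ‖α‖ ^ 2 ≤ ‖S α‖ ^ 2 ∧ ‖S α‖ ^ 2 ≤ D * ‖α‖ ^ 2)
    (hWS : ∀ g : H, g ∈ (Submodule.span ℂ (Set.range w)).topologicalClosure →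
      (∀ k, ⟪s k, g⟫_ℂ = 0) → g = 0)
    (β : H2) (f : H) (hf : f = W β) (n : ℕ) :
    ∃ M : ℕ, ∀ m, M ≤ m →
      (∃! βt : H2, βt ∈ Ksub n ∧
        Sec n m ((ContinuousLinearMap.adjoint S).comp W) βt =
          ((Pn n).comp ((ContinuousLinearMap.adjoint
              ((ContinuousLinearMap.adjoint S).comp W)).comp (Pn m)))
            ((ContinuousLinearMap.adjoint S) f)) ∧
      (∀ βt : H2, βt ∈ Ksub n →
        Sec n m ((ContinuousLinearMap.adjoint S).comp W) βt =
          ((Pn n).comp ((ContinuousLinearMap.adjoint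
              ((ContinuousLinearMap.adjoint S).comp W)).comp (Pn m)))
            ((ContinuousLinearMap.adjoint S) f) →
        ∀ Ainv : Ksub n →L[ℂ] Ksub n,
          Ainv.comp (compKm n m ((ContinuousLinearMap.adjoint S).comp W))
            = ContinuousLinearMap.id ℂ (Ksub n) →
          (compKm n m ((ContinuousLinearMap.adjoint S).comp W)).comp Ainv
            = ContinuousLinearMap.id ℂ (Ksub n) →
          ‖f - W βt‖ ≤ Real.sqrt B *
            (1 + ‖Kop n m ((ContinuousLinearMap.adjoint S).comp W) Ainv‖) *
            ‖β - Pn n β‖) :=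
  abstract_sampling_theorem_general s w A B hA S W hS hW hrw hWS β f hf n
end
end

section
/- Let U be a bounded operator on l²(ℕ) with U*U = cI for some c > 0. Then for all n, m ∈ ℕ, ‖P_n U* P_m U P_n^⊥‖² ≤ ‖U‖² · ‖P_n U* P_m U P_n − P_n U* U P_n‖. -/
noncomputable section
open MeasureTheory ContinuousLinearMap Filter Topology
open scoped InnerProductSpace

section StarProjection

variable {A : Type*}

lemma IsStarProjection.mul_star_mul_mul_mul_eq [Ring A] [StarRing A] {q : A}
    (hq : IsStarProjection q) (x u y : A) :
    x * star u * q * u * y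
      = x * star u * u * y - star ((1 - q) * u * star x) * ((1 - q) * u * y) := by
  have hq' : (1 - q) * (1 - q) = 1 - q := hq.one_sub.isIdempotentElem.eq
  simp only [star_mul, star_star, hq.one_sub.isSelfAdjoint.star_eq]
  calc x * star u * q * u * y
      = x * star u * u * y - x * star u * (1 - q) * u * y := by noncomm_ring
    _ = x * star u * u * y - x * star u * ((1 - q) * (1 - q)) * u * y := by rw [hq']
    _ = _ := by noncomm_ring

variable [NormedRing A] [StarRing A] [CStarRing A] {p q : A}

lemma IsStarProjection.norm_mul_mul_le (hp : IsStarProjection p) (hq : IsStarProjection q)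
    (u : A) : ‖p * u * q‖ ≤ ‖u‖ :=
  calc ‖p * u * q‖ ≤ ‖p‖ * ‖u‖ * ‖q‖ := norm_mul₃_le
    _ ≤ 1 * ‖u‖ * 1 := by
      gcongr
      exacts [hp.norm_le, hq.norm_le]
    _ = ‖u‖ := by ring

/-- Writing `a = (1 - q) u p` and `b = (1 - q) u (1 - p)`, the off-diagonal block is `-a⋆b`
(because `p` commutes with `u⋆u`) and the difference of diagonal blocks is `-a⋆a`, so the
C⋆-identity `‖a⋆a‖ = ‖a‖²` gives the bound. -/
theorem IsStarProjection.norm_offDiag_sq_le (hp : IsStarProjection p)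
    (hq : IsStarProjection q) {u : A} (hu : Commute p (star u * u)) :
    ‖p * star u * q * u * (1 - p)‖ ^ 2
      ≤ ‖u‖ ^ 2 * ‖p * star u * q * u * p - p * star u * u * p‖ := by
  set a := (1 - q) * u * p
  set b := (1 - q) * u * (1 - p)
  have hoff : p * star u * q * u * (1 - p) = -(star a * b) := by
    have hzero : p * star u * u * (1 - p) = 0 := by
      rw [mul_assoc p, hu.eq, mul_assoc, hp.mul_one_sub_self, mul_zero]
    rw [hq.mul_star_mul_mul_mul_eq, hzero, zero_sub, hp.isSelfAdjoint.star_eq]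
  have hdiag : p * star u * q * u * p - p * star u * u * p = -(star a * a) := by
    rw [hq.mul_star_mul_mul_mul_eq, hp.isSelfAdjoint.star_eq, sub_sub_cancel_left]
  have hb : ‖b‖ ≤ ‖u‖ := hq.one_sub.norm_mul_mul_le hp.one_sub u
  calc ‖p * star u * q * u * (1 - p)‖ ^ 2
      ≤ (‖a‖ * ‖b‖) ^ 2 := by
        rw [hoff, norm_neg]
        gcongr
        exact (norm_mul_le _ _).trans_eq (by rw [norm_star])
    _ = ‖star a * a‖ * ‖b‖ ^ 2 := by rw [CStarRing.norm_star_mul_self]; ring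
    _ ≤ ‖star a * a‖ * ‖u‖ ^ 2 := by gcongr
    _ = _ := by rw [hdiag, norm_neg, mul_comm]

end StarProjection

lemma isStarProjection_Pn (n : ℕ) : IsStarProjection (Pn n) :=
  isStarProjection_starProjection

lemma SecPerp_eq_mul (n m : ℕ) (U : H2 →L[ℂ] H2) :
    SecPerp n m U = Pn n * star U * Pn m * U * (1 - Pn n) := by
  simp only [mul_assoc]
  rfl

lemma Sec_sub_SecInf_eq_mul (n m : ℕ) (U : H2 →L[ℂ] H2) :
    Sec n m U - SecInf n U = Pn n * star U * Pn m * U * Pn n - Pn n * star U * U * Pn n := by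
  simp only [mul_assoc]
  rfl

theorem SecPerp_sq_le_general (U : H2 →L[ℂ] H2) (c : ℝ)
    (hU : (ContinuousLinearMap.adjoint U).comp U
      = ((c : ℂ)) • ContinuousLinearMap.id ℂ H2) :
    ∀ n m : ℕ, ‖SecPerp n m U‖ ^ 2 ≤ ‖U‖ ^ 2 * ‖Sec n m U - SecInf n U‖ := by
  intro n m
  have hcomm : Commute (Pn n) (star U * U) := by
    rw [show star U * U = (c : ℂ) • 1 from hU]
    exact (Commute.one_right _).smul_right _
  rw [SecPerp_eq_mul, Sec_sub_SecInf_eq_mul]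
  exact (isStarProjection_Pn n).norm_offDiag_sq_le (isStarProjection_Pn m) hcomm

/-- If `U*U = c·I` with `c > 0`, then for all `n, m`,
`‖P_n U* P_m U P_n^⊥‖² ≤ ‖U‖² · ‖P_n U* P_m U P_n − P_n U* U P_n‖`. -/
theorem SecPerp_sq_le (U : H2 →L[ℂ] H2) (c : ℝ) (hc : 0 < c)
    (hU : (ContinuousLinearMap.adjoint U).comp U
      = ((c : ℂ)) • ContinuousLinearMap.id ℂ H2) :
    ∀ n m : ℕ, ‖SecPerp n m U‖ ^ 2 ≤ ‖U‖ ^ 2 * ‖Sec n m U - SecInf n U‖ :=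
  SecPerp_sq_le_general U c hU
end
end

section
/- With the hypotheses of the abstract sampling theorem, the reconstruction f̃ = W_n(W_n* S_m S_m* W_n)^{-1} W_n* S_m S_m* f satisfies the two-sided bound ‖P_{W_n}^⊥ f‖ ≤ ‖f − f̃‖ ≤ (1 + K_{n,m}) ‖P_{W_n}^⊥ f‖, where K_{n,m} = ‖W_n(W_n* S_m S_m* W_n)^{-1} W_n* S_m S_m* P_{W_n}^⊥‖, provided W_n* S_m S_m* W_n is invertible. -/
noncomputable section
open MeasureTheory ContinuousLinearMap Filter Topology
open scoped InnerProductSpace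

/-- Orthogonal projection of `H` onto the span of finitely many vectors, as an operator
`H →L[ℂ] H`. -/
def projFin {H : Type*} [NormedAddCommGroup H] [InnerProductSpace ℂ H] [CompleteSpace H]
    {n : ℕ} (v : Fin n → H) : H →L[ℂ] H :=
  letI : FiniteDimensional ℂ (Submodule.span ℂ (Set.range v)) :=
    FiniteDimensional.span_of_finite ℂ (Set.finite_range v)
  (Submodule.span ℂ (Set.range v)).subtypeL.comp
    (Submodule.span ℂ (Set.range v)).orthogonalProjectionOnto

/-!
The reconstruction `f̃ = Q f` comes from the operator `Q = W_n G W_n* S_m S_m*`, and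
`G W_n* S_m S_m* W_n = 1` says exactly that `Q` fixes `W_n = span {w_1, …, w_n}` pointwise.
Hence `f̃ ∈ W_n`, which gives the lower bound by the best-approximation property of the
orthogonal projection `P`. Since `Q P = P`, also `f − f̃ = (1 − P) f − Q (1 − P) f`, and
`(1 − P) f = (1 − P)² f` turns the second term into `Q (1 − P)` applied to `(1 − P) f`.
-/

theorem Submodule.norm_sub_starProjection_le_of_mem {𝕜 E : Type*} [RCLike 𝕜]
    [NormedAddCommGroup E] [InnerProductSpace 𝕜 E] (K : Submodule 𝕜 E)
    [K.HasOrthogonalProjection] (f : E) {g : E} (hg : g ∈ K) :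
    ‖f - K.starProjection f‖ ≤ ‖f - g‖ := by
  rw [starProjection_minimal]
  exact ciInf_le ⟨0, by rintro _ ⟨x, rfl⟩; positivity⟩ (⟨g, hg⟩ : K)

theorem ContinuousLinearMap.norm_sub_apply_le_of_comp_idempotent {𝕜 E : Type*}
    [NontriviallyNormedField 𝕜] [NormedAddCommGroup E] [NormedSpace 𝕜 E]
    {P Q : E →L[𝕜] E} (hP : IsIdempotentElem P) (hQP : Q ∘L P = P) (f : E) :
    ‖f - Q f‖ ≤ (1 + ‖Q ∘L (ContinuousLinearMap.id 𝕜 E - P)‖) * ‖f - P f‖ := by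
  set R := Q ∘L (ContinuousLinearMap.id 𝕜 E - P)
  have hcompl : (ContinuousLinearMap.id 𝕜 E - P) (f - P f) = f - P f := by
    rw [sub_apply, id_apply, map_sub, ← comp_apply, ← mul_def, hP.eq, sub_self, sub_zero]
  have hdecomp : f - Q f = (f - P f) - R (f - P f) := by
    rw [comp_apply, hcompl, map_sub, ← comp_apply Q P, hQP]
    abel
  calc ‖f - Q f‖ ≤ ‖f - P f‖ + ‖R (f - P f)‖ := hdecomp ▸ norm_sub_le _ _
    _ ≤ ‖f - P f‖ + ‖R‖ * ‖f - P f‖ := by gcongr; exact R.le_opNorm _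
    _ = (1 + ‖R‖) * ‖f - P f‖ := by ring

theorem range_eq_span_of_apply_eq_sum {𝕜 E : Type*} [RCLike 𝕜] [NormedAddCommGroup E]
    [NormedSpace 𝕜 E] {ι : Type*} [Fintype ι] [DecidableEq ι] {v : ι → E}
    {T : EuclideanSpace 𝕜 ι →L[𝕜] E} (hT : ∀ y, T y = ∑ k, y k • v k) :
    LinearMap.range (T : EuclideanSpace 𝕜 ι →ₗ[𝕜] E) =
      Submodule.span 𝕜 (Set.range v) := by
  refine le_antisymm ?_ ((Submodule.span_le).2 ?_)
  · rintro _ ⟨y, rfl⟩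
    rw [coe_coe, hT]
    exact Submodule.sum_mem _ fun k _ => Submodule.smul_mem _ _ (Submodule.subset_span ⟨k, rfl⟩)
  · rintro _ ⟨k, rfl⟩
    refine ⟨EuclideanSpace.single k 1, ?_⟩
    simp [hT]

theorem two_sided_reconstruction_bound_general {H : Type*} [NormedAddCommGroup H]
    [InnerProductSpace ℂ H] [CompleteSpace H]
    (w : ℕ → H)
    (n m : ℕ)
    (Wn : EuclideanSpace ℂ (Fin n) →L[ℂ] H) (Sm : EuclideanSpace ℂ (Fin m) →L[ℂ] H)
    (hWn : ∀ y, Wn y = ∑ k, y k • w (k : ℕ))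
    (G : EuclideanSpace ℂ (Fin n) →L[ℂ] EuclideanSpace ℂ (Fin n))
    (hG1 : G.comp ((ContinuousLinearMap.adjoint Wn).comp
        (Sm.comp ((ContinuousLinearMap.adjoint Sm).comp Wn)))
      = ContinuousLinearMap.id ℂ (EuclideanSpace ℂ (Fin n)))
    (f : H) :
    ‖f - projFin (fun k : Fin n => w (k : ℕ)) f‖ ≤
        ‖f - Wn (G ((ContinuousLinearMap.adjoint Wn)
          (Sm ((ContinuousLinearMap.adjoint Sm) f))))‖ ∧
      ‖f - Wn (G ((ContinuousLinearMap.adjoint Wn)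
          (Sm ((ContinuousLinearMap.adjoint Sm) f))))‖ ≤
        (1 + ‖Wn.comp (G.comp ((ContinuousLinearMap.adjoint Wn).comp
            (Sm.comp ((ContinuousLinearMap.adjoint Sm).comp
              (ContinuousLinearMap.id ℂ H - projFin (fun k : Fin n => w (k : ℕ)))))))‖) *
          ‖f - projFin (fun k : Fin n => w (k : ℕ)) f‖ := by
  set K := Submodule.span ℂ (Set.range fun k : Fin n => w (k : ℕ))
  have : FiniteDimensional ℂ K := FiniteDimensional.span_of_finite ℂ (Set.finite_range _)
  have hK : LinearMap.range (Wn : EuclideanSpace ℂ (Fin n) →ₗ[ℂ] H) = K :=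
    range_eq_span_of_apply_eq_sum hWn
  set Q : H →L[ℂ] H := Wn ∘L G ∘L adjoint Wn ∘L Sm ∘L adjoint Sm
  have hfix : ∀ g ∈ K, Q g = g := by
    rw [← hK]
    rintro _ ⟨y, rfl⟩
    simpa [Q] using congrArg Wn (ContinuousLinearMap.ext_iff.mp hG1 y)
  have hQP : Q ∘L K.starProjection = K.starProjection :=
    ext fun g => hfix _ (K.starProjection_apply_mem g)
  exact ⟨K.norm_sub_starProjection_le_of_mem f (hK ▸ LinearMap.mem_range_self _ _),
    norm_sub_apply_le_of_comp_idempotent K.isIdempotentElem_starProjection hQP f⟩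

/-- With the hypotheses of the abstract sampling theorem, whenever
`W_n* S_m S_m* W_n` is invertible, the reconstruction
`f̃ = W_n (W_n* S_m S_m* W_n)⁻¹ W_n* S_m S_m* f` satisfies
`‖P_{W_n}^⊥ f‖ ≤ ‖f − f̃‖ ≤ (1 + K_{n,m}) ‖P_{W_n}^⊥ f‖`, where
`K_{n,m} = ‖W_n (W_n* S_m S_m* W_n)⁻¹ W_n* S_m S_m* P_{W_n}^⊥‖`. -/
theorem two_sided_reconstruction_bound {H : Type*} [NormedAddCommGroup H]
    [InnerProductSpace ℂ H] [CompleteSpace H]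
    (s w : ℕ → H) (A B C D : ℝ) (hA : 0 < A) (hAB : A ≤ B) (hC : 0 < C) (hCD : C ≤ D)
    (S W : H2 →L[ℂ] H)
    (hS : ∀ α : H2, HasSum (fun k => α k • s k) (S α))
    (hW : ∀ α : H2, HasSum (fun k => α k • w k) (W α))
    (hrw : ∀ α : H2, A * ‖α‖ ^ 2 ≤ ‖W α‖ ^ 2 ∧ ‖W α‖ ^ 2 ≤ B * ‖α‖ ^ 2)
    (hrs : ∀ α : H2, C * ‖α‖ ^ 2 ≤ ‖S α‖ ^ 2 ∧ ‖S α‖ ^ 2 ≤ D * ‖α‖ ^ 2)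
    (hWS : ∀ g : H, g ∈ (Submodule.span ℂ (Set.range w)).topologicalClosure →
      (∀ k, ⟪s k, g⟫_ℂ = 0) → g = 0)
    (n m : ℕ)
    (Wn : EuclideanSpace ℂ (Fin n) →L[ℂ] H) (Sm : EuclideanSpace ℂ (Fin m) →L[ℂ] H)
    (hWn : ∀ y, Wn y = ∑ k, y k • w (k : ℕ))
    (hSm : ∀ x, Sm x = ∑ k, x k • s (k : ℕ))
    (G : EuclideanSpace ℂ (Fin n) →L[ℂ] EuclideanSpace ℂ (Fin n))
    (hG1 : G.comp ((ContinuousLinearMap.adjoint Wn).comp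
        (Sm.comp ((ContinuousLinearMap.adjoint Sm).comp Wn)))
      = ContinuousLinearMap.id ℂ (EuclideanSpace ℂ (Fin n)))
    (hG2 : ((ContinuousLinearMap.adjoint Wn).comp
        (Sm.comp ((ContinuousLinearMap.adjoint Sm).comp Wn))).comp G
      = ContinuousLinearMap.id ℂ (EuclideanSpace ℂ (Fin n)))
    (f : H) :
    ‖f - projFin (fun k : Fin n => w (k : ℕ)) f‖ ≤
        ‖f - Wn (G ((ContinuousLinearMap.adjoint Wn)
          (Sm ((ContinuousLinearMap.adjoint Sm) f))))‖ ∧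
      ‖f - Wn (G ((ContinuousLinearMap.adjoint Wn)
          (Sm ((ContinuousLinearMap.adjoint Sm) f))))‖ ≤
        (1 + ‖Wn.comp (G.comp ((ContinuousLinearMap.adjoint Wn).comp
            (Sm.comp ((ContinuousLinearMap.adjoint Sm).comp
              (ContinuousLinearMap.id ℂ H - projFin (fun k : Fin n => w (k : ℕ)))))))‖) *
          ‖f - projFin (fun k : Fin n => w (k : ℕ)) f‖ :=
  two_sided_reconstruction_bound_general w n m Wn Sm hWn G hG1 f
end
end
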